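/- For every integer k ≥ 3 there is a constant C > 0 such that for all integers q ≥ k and e ≥ 1, every 1-(q,k)-system consisting of e q-cliques has chromatic number at most C · e^{1/(2k−2)} · q. -/

import Mathlib

/-!
Colour in rounds, measuring progress by `Φ(U)`, the number of edges inside the set `U` of
vertices still to be coloured. A uniformly random colouring of `U` with `t` colours leaves on
average at most `Φ(U) / t^(k-1)` monochromatic edges; fix a colouring doing at least this well,
let `W` be the union of its monochromatic edges, and recolour `W` with fresh colours. Two
vertices of `W` lie in at most one clique, so `2 Φ(W) ≤ q^(k-2) |W|² ≤ q^(k-2) k² Φ(U)² / t^(2k-2)`.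
Taking `t = ⌈(B Φ(U))^(1/(2k-2))⌉` with `B = 2^(2k-2) k² q^(k-2)` makes `Φ` drop by a factor
`2^(2k-1)`, so the numbers of colours used in successive rounds decrease geometrically and add
up to at most `4 (B Φ)^(1/(2k-2)) + 1`. Initially `Φ ≤ e q^k`, which gives `O_k(e^(1/(2k-2)) q)`.
-/

/-- `𝒜` is a family of `q`-element vertex sets (`q`-cliques) that pairwise share at most `ℓ`
vertices.  The associated `k`-uniform hypergraph (an `ℓ`-`(q,k)`-system) has as edges all
`k`-element subsets of members of `𝒜`. -/
def IsSystem {V : Type*} [DecidableEq V] (ℓ q : ℕ) (𝒜 : Finset (Finset V)) : Prop :=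
  (∀ A ∈ 𝒜, A.card = q) ∧
    ∀ A ∈ 𝒜, ∀ B ∈ 𝒜, A ≠ B → (A ∩ B).card ≤ ℓ

/-- The `k`-uniform hypergraph whose edges are all `k`-element subsets of members of `𝒜`
admits a proper coloring with `n` colors: no edge is monochromatic. -/
def SysColorable {V : Type*} (k n : ℕ) (𝒜 : Finset (Finset V)) : Prop :=
  ∃ χ : V → Fin n, ∀ A ∈ 𝒜, ∀ S ⊆ A, S.card = k → ∃ u ∈ S, ∃ w ∈ S, χ u ≠ χ w

open Finset

theorem Nat.choose_le_choose_two_mul_pow {s k q : ℕ} (hk : 2 ≤ k) (hs : s ≤ q) :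
    s.choose k ≤ s.choose 2 * q ^ (k - 2) := by
  calc s.choose k ≤ s.choose k * k.choose 2 :=
        Nat.le_mul_of_pos_right _ (Nat.choose_pos hk)
    _ = s.choose 2 * (s - 2).choose (k - 2) := Nat.choose_mul hk
    _ ≤ s.choose 2 * q ^ (k - 2) := by
        gcongr
        exact (Nat.choose_le_pow _ _).trans (Nat.pow_le_pow_left (by omega) _)

theorem Nat.two_mul_choose_two_le_sq (n : ℕ) : 2 * n.choose 2 ≤ n ^ 2 := by
  rw [Nat.choose_two_right, sq]
  calc 2 * (n * (n - 1) / 2) ≤ n * (n - 1) := Nat.mul_div_le _ _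
    _ ≤ n * n := Nat.mul_le_mul_left _ (Nat.sub_le _ _)

theorem Real.natCast_le_natCeil_rpow_inv_pow (x : ℕ) {m : ℕ} (hm : m ≠ 0) :
    x ≤ ⌈(x : ℝ) ^ (m⁻¹ : ℝ)⌉₊ ^ m := by
  have h : ((x : ℝ) ^ (m⁻¹ : ℝ)) ^ m ≤ (⌈(x : ℝ) ^ (m⁻¹ : ℝ)⌉₊ : ℝ) ^ m :=
    pow_le_pow_left₀ (by positivity) (Nat.le_ceil _) m
  rw [Real.rpow_inv_natCast_pow (Nat.cast_nonneg x) hm] at h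
  exact_mod_cast h

theorem Real.rpow_inv_natCast_le_half {x y : ℝ} {m : ℕ} (hm : m ≠ 0) (hy : 0 ≤ y)
    (hxy : 2 ^ m * y ≤ x) : y ^ (m⁻¹ : ℝ) ≤ x ^ (m⁻¹ : ℝ) / 2 := by
  have h := Real.rpow_le_rpow (by positivity) hxy (by positivity : (0 : ℝ) ≤ (m : ℝ)⁻¹)
  rw [Real.mul_rpow (by positivity) hy, Real.pow_rpow_inv_natCast zero_le_two hm] at h
  linarith

theorem Real.rpow_inv_natCast_le_mul {x a e b : ℝ} {m : ℕ} (hm : m ≠ 0) (hx : 0 ≤ x)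
    (ha : 1 ≤ a) (he : 0 ≤ e) (hb : 0 ≤ b) (h : x ≤ a * e * b ^ m) :
    x ^ (m⁻¹ : ℝ) ≤ a * e ^ (m⁻¹ : ℝ) * b := by
  have hinv : (m⁻¹ : ℝ) ≤ 1 := inv_le_one_of_one_le₀ (by exact_mod_cast Nat.one_le_iff_ne_zero.2 hm)
  calc x ^ (m⁻¹ : ℝ) ≤ (a * e * b ^ m) ^ (m⁻¹ : ℝ) := Real.rpow_le_rpow hx h (by positivity)
    _ = a ^ (m⁻¹ : ℝ) * e ^ (m⁻¹ : ℝ) * b := by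
        rw [Real.mul_rpow (by positivity) (by positivity), Real.mul_rpow (by positivity) he,
          Real.pow_rpow_inv_natCast hb hm]
    _ ≤ a * e ^ (m⁻¹ : ℝ) * b := by
        gcongr
        simpa using Real.rpow_le_rpow_of_exponent_le ha hinv

variable {V : Type*} [DecidableEq V]

def IsMonochromatic {α : Type*} (c : V → α) (S : Finset V) : Prop :=
  ∀ u ∈ S, ∀ w ∈ S, c u = c w

instance {α : Type*} [DecidableEq α] (c : V → α) : DecidablePred (IsMonochromatic c) :=
  fun _ => by unfold IsMonochromatic; infer_instance

/-- The edges of the system lying inside `U`, each tagged with a clique containing it. -/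
def edgesWithin (k : ℕ) (𝒜 : Finset (Finset V)) (U : Finset V) :
    Finset ((_ : Finset V) × Finset V) :=
  𝒜.sigma fun A => (A ∩ U).powersetCard k

def IsProperOn {α : Type*} (k : ℕ) (𝒜 : Finset (Finset V)) (U : Finset V) (c : V → α) : Prop :=
  ∀ x ∈ edgesWithin k 𝒜 U, ¬ IsMonochromatic c x.2

section Counting

variable {k : ℕ} {𝒜 : Finset (Finset V)} {U : Finset V}

theorem card_edgesWithin : #(edgesWithin k 𝒜 U) = ∑ A ∈ 𝒜, (#(A ∩ U)).choose k := by
  simp only [edgesWithin, card_sigma, card_powersetCard]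

theorem mem_edgesWithin {x : (_ : Finset V) × Finset V} :
    x ∈ edgesWithin k 𝒜 U ↔ x.1 ∈ 𝒜 ∧ x.2 ⊆ x.1 ∩ U ∧ #x.2 = k := by
  simp only [edgesWithin, mem_sigma, mem_powersetCard]

theorem card_edgesWithin_le {q : ℕ} (h𝒜 : ∀ A ∈ 𝒜, #A = q) :
    #(edgesWithin k 𝒜 U) ≤ #𝒜 * q ^ k := by
  rw [card_edgesWithin, ← smul_eq_mul, ← sum_const]
  refine sum_le_sum fun A hA => (Nat.choose_le_pow _ _).trans (Nat.pow_le_pow_left ?_ _)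
  exact (card_le_card inter_subset_left).trans (h𝒜 A hA).le

theorem card_edgesWithin_two_le (h𝒜 : ∀ A ∈ 𝒜, ∀ B ∈ 𝒜, A ≠ B → #(A ∩ B) ≤ 1) :
    #(edgesWithin 2 𝒜 U) ≤ (#U).choose 2 := by
  rw [← card_powersetCard]
  refine card_le_card_of_injOn Sigma.snd (fun x hx => ?_) fun x hx y hy hxy => ?_
  · obtain ⟨-, hxU, hx2⟩ := mem_edgesWithin.1 hx
    exact mem_powersetCard.2 ⟨hxU.trans inter_subset_right, hx2⟩
  · obtain ⟨hx𝒜, hxU, hx2⟩ := mem_edgesWithin.1 hx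
    obtain ⟨hy𝒜, hyU, -⟩ := mem_edgesWithin.1 hy
    have hsub : x.2 ⊆ x.1 ∩ y.1 :=
      subset_inter (hxU.trans inter_subset_left) (hxy ▸ hyU.trans inter_subset_left)
    have hxy1 : x.1 = y.1 := by
      by_contra hne
      have := (card_le_card hsub).trans (h𝒜 _ hx𝒜 _ hy𝒜 hne)
      omega
    exact Sigma.ext hxy1 (heq_of_eq hxy)

theorem two_mul_card_edgesWithin_le {q : ℕ} (h𝒜 : IsSystem 1 q 𝒜) (hk : 2 ≤ k) (W : Finset V) :
    2 * #(edgesWithin k 𝒜 W) ≤ q ^ (k - 2) * #W ^ 2 := by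
  have hA : ∀ A ∈ 𝒜, (#(A ∩ W)).choose k ≤ (#(A ∩ W)).choose 2 * q ^ (k - 2) := fun A hA =>
    Nat.choose_le_choose_two_mul_pow hk ((card_le_card inter_subset_left).trans (h𝒜.1 A hA).le)
  calc 2 * #(edgesWithin k 𝒜 W) ≤ 2 * (#(edgesWithin 2 𝒜 W) * q ^ (k - 2)) := by
        rw [card_edgesWithin, card_edgesWithin, sum_mul]
        exact Nat.mul_le_mul_left _ (sum_le_sum hA)
    _ ≤ 2 * ((#W).choose 2 * q ^ (k - 2)) := by
        gcongr
        exact card_edgesWithin_two_le h𝒜.2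
    _ ≤ q ^ (k - 2) * #W ^ 2 := by
        rw [← mul_assoc, mul_comm]
        exact Nat.mul_le_mul_left _ (Nat.two_mul_choose_two_le_sq _)

end Counting

section Averaging

variable {t : ℕ} [NeZero t] (U : Finset V)

def extendByZero (f : U → Fin t) (v : V) : Fin t :=
  if h : v ∈ U then f ⟨v, h⟩ else 0

theorem pow_mul_card_isMonochromatic_extendByZero_le {S : Finset V} (hSU : S ⊆ U)
    (hS : S.Nonempty) :
    t ^ (#S - 1) * #{f : U → Fin t | IsMonochromatic (extendByZero U f) S} ≤ t ^ #U := by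
  obtain ⟨v₀, hv₀⟩ := hS
  have hsub : ({f | IsMonochromatic (extendByZero U f) S} : Finset (U → Fin t)) ⊆
      univ.biUnion fun a => Fintype.piFinset fun u : U => if (u : V) ∈ S then {a} else univ := by
    intro f hf
    simp only [mem_filter, mem_univ, true_and] at hf
    simp only [mem_biUnion, mem_univ, true_and, Fintype.mem_piFinset]
    refine ⟨extendByZero U f v₀, fun u => ?_⟩
    split_ifs with hu
    · rw [mem_singleton, ← hf u hu v₀ hv₀]
      simp [extendByZero]
    · exact mem_univ _
  have hcard : ∀ a : Fin t,
      #(Fintype.piFinset fun u : U => if (u : V) ∈ S then {a} else univ) = t ^ (#U - #S) := by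
    intro a
    rw [Fintype.card_piFinset]
    simp only [apply_ite card, card_singleton, card_univ, Fintype.card_fin]
    rw [prod_coe_sort U fun v => if v ∈ S then 1 else t, prod_ite, prod_const_one, one_mul,
      prod_const, filter_notMem_eq_sdiff, card_sdiff_of_subset hSU]
  have hS1 : 1 ≤ #S := card_pos.2 ⟨v₀, hv₀⟩
  have hSU' : #S ≤ #U := card_le_card hSU
  calc t ^ (#S - 1) * #{f : U → Fin t | IsMonochromatic (extendByZero U f) S}
      ≤ t ^ (#S - 1) * (t * t ^ (#U - #S)) := by
        gcongr
        refine (card_le_card hsub).trans (card_biUnion_le.trans ?_)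
        simp [hcard]
    _ = t ^ #U := by rw [← mul_assoc, ← pow_succ, ← pow_add]; congr 1; omega

theorem exists_coloring_pow_mul_card_isMonochromatic_le {ι : Type*} {k : ℕ} (hk : k ≠ 0)
    (I : Finset ι) (S : ι → Finset V) (hSU : ∀ i ∈ I, S i ⊆ U) (hS : ∀ i ∈ I, #(S i) = k) :
    ∃ c : V → Fin t, t ^ (k - 1) * #{i ∈ I | IsMonochromatic c (S i)} ≤ #I := by
  have hcount : ∑ f : U → Fin t, t ^ (k - 1) * #{i ∈ I | IsMonochromatic (extendByZero U f) (S i)}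
      ≤ ∑ _f : U → Fin t, #I :=
    calc _ = ∑ i ∈ I,
            t ^ (k - 1) * #{f : U → Fin t | IsMonochromatic (extendByZero U f) (S i)} := by
          rw [← mul_sum, ← mul_sum]
          exact congrArg _ (sum_card_bipartiteAbove_eq_sum_card_bipartiteBelow _)
      _ ≤ ∑ _i ∈ I, t ^ #U := sum_le_sum fun i hi => by
          simpa [hS i hi] using pow_mul_card_isMonochromatic_extendByZero_le U (hSU i hi)
            (card_pos.1 (by rw [hS i hi]; omega))
      _ = ∑ _f : U → Fin t, #I := by simp [mul_comm]
  obtain ⟨f, -, hf⟩ := exists_le_of_sum_le univ_nonempty hcount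
  exact ⟨extendByZero U f, hf⟩

end Averaging

section Recoloring

variable {k q : ℕ} {𝒜 : Finset (Finset V)}

theorem exists_coloring_small_monochromatic_cover {t : ℕ} [NeZero t] (h𝒜 : IsSystem 1 q 𝒜)
    (hk : 2 ≤ k) (U : Finset V) :
    ∃ (c : V → Fin t) (W : Finset V),
      (∀ x ∈ edgesWithin k 𝒜 U, IsMonochromatic c x.2 → x ∈ edgesWithin k 𝒜 W) ∧
      t ^ (2 * k - 2) * (2 * #(edgesWithin k 𝒜 W)) ≤
        k ^ 2 * q ^ (k - 2) * #(edgesWithin k 𝒜 U) ^ 2 := by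
  obtain ⟨c, hc⟩ := exists_coloring_pow_mul_card_isMonochromatic_le (t := t) U (by omega)
    (edgesWithin k 𝒜 U) Sigma.snd (fun x hx => (mem_edgesWithin.1 hx).2.1.trans inter_subset_right)
    (fun x hx => (mem_edgesWithin.1 hx).2.2)
  set bad := {x ∈ edgesWithin k 𝒜 U | IsMonochromatic c x.2}
  refine ⟨c, bad.biUnion Sigma.snd, fun x hx hmono => ?_, ?_⟩
  · obtain ⟨hx𝒜, hxU, hxk⟩ := mem_edgesWithin.1 hx
    refine mem_edgesWithin.2 ⟨hx𝒜, subset_inter (hxU.trans inter_subset_left) ?_, hxk⟩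
    exact subset_biUnion_of_mem Sigma.snd (show x ∈ bad from mem_filter.2 ⟨hx, hmono⟩)
  · have hW : #(bad.biUnion Sigma.snd) ≤ #bad * k :=
      card_biUnion_le_card_mul _ _ _ fun x hx => (mem_edgesWithin.1 (mem_filter.1 hx).1).2.2.le
    calc t ^ (2 * k - 2) * (2 * #(edgesWithin k 𝒜 (bad.biUnion Sigma.snd)))
        ≤ t ^ (2 * k - 2) * (q ^ (k - 2) * (#bad * k) ^ 2) := by
          refine Nat.mul_le_mul_left _ ((two_mul_card_edgesWithin_le h𝒜 hk _).trans ?_)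
          gcongr
      _ = k ^ 2 * q ^ (k - 2) * (t ^ (k - 1) * #bad) ^ 2 := by
          rw [show 2 * k - 2 = (k - 1) * 2 by omega, pow_mul]; ring
      _ ≤ k ^ 2 * q ^ (k - 2) * #(edgesWithin k 𝒜 U) ^ 2 := by gcongr

theorem IsProperOn.of_recoloring {t N : ℕ} {U W : Finset V} {c₀ : V → Fin t} {c : V → Fin N}
    (hc₀ : ∀ x ∈ edgesWithin k 𝒜 U, IsMonochromatic c₀ x.2 → x ∈ edgesWithin k 𝒜 W)
    (hc : IsProperOn k 𝒜 W c) :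
    IsProperOn k 𝒜 U fun v => if v ∈ W then Fin.natAdd t (c v) else Fin.castAdd N (c₀ v) := by
  intro x hx hmono
  by_cases hxW : x.2 ⊆ W
  · have hxW' : x ∈ edgesWithin k 𝒜 W := by
      obtain ⟨hx𝒜, hxU, hxk⟩ := mem_edgesWithin.1 hx
      exact mem_edgesWithin.2 ⟨hx𝒜, subset_inter (hxU.trans inter_subset_left) hxW, hxk⟩
    refine hc x hxW' fun u hu w hw => ?_
    simpa [hxW hu, hxW hw] using hmono u hu w hw
  · obtain ⟨w, hw, hwW⟩ := not_subset.1 hxW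
    have hout : ∀ v ∈ x.2, v ∉ W := fun v hv hvW => by
      have := hmono v hv w hw
      simp only [hvW, hwW, if_true, if_false, Fin.ext_iff, Fin.val_natAdd, Fin.val_castAdd] at this
      omega
    have hmono₀ : IsMonochromatic c₀ x.2 := fun u hu u' hu' => by
      simpa [hout u hu, hout u' hu'] using hmono u hu u' hu'
    exact hwW (mem_inter.1 ((mem_edgesWithin.1 (hc₀ x hx hmono₀)).2.1 hw)).2

end Recoloring

section Recursion

variable {k q : ℕ} {𝒜 : Finset (Finset V)}

theorem exists_isProperOn (h𝒜 : IsSystem 1 q 𝒜) (hk : 2 ≤ k) (hq : 0 < q) (U : Finset V) :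
    ∃ N, ∃ c : V → Fin N, IsProperOn k 𝒜 U c ∧
      (N : ℝ) ≤ 4 * ((2 ^ (2 * k - 2) * k ^ 2 * q ^ (k - 2) * #(edgesWithin k 𝒜 U) : ℕ) : ℝ) ^
        ((2 * k - 2 : ℕ) : ℝ)⁻¹ + 1 := by
  set m := 2 * k - 2
  have hm : m ≠ 0 := by omega
  set B := 2 ^ m * k ^ 2 * q ^ (k - 2)
  induction hΦ : #(edgesWithin k 𝒜 U) using Nat.strong_induction_on generalizing U with
  | _ Φ ih =>
  rcases Nat.eq_zero_or_pos Φ with rfl | hΦ0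
  · refine ⟨1, 0, fun x hx => absurd hx ?_, ?_⟩
    · simp [card_eq_zero.1 hΦ]
    · simp [Real.zero_rpow (inv_ne_zero (Nat.cast_ne_zero.2 hm))]
  set r := ((B * Φ : ℕ) : ℝ) ^ (m⁻¹ : ℝ)
  have hr : 1 ≤ r := Real.one_le_rpow (by exact_mod_cast Nat.one_le_iff_ne_zero.2 (by positivity))
    (by positivity)
  set t := ⌈r⌉₊
  have : NeZero t := ⟨by positivity⟩
  obtain ⟨c₀, W, hc₀, hW⟩ := exists_coloring_small_monochromatic_cover (t := t) h𝒜 hk U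
  set Ψ := #(edgesWithin k 𝒜 W)
  have hdecay : 2 ^ m * (2 * Ψ) ≤ Φ := by
    refine Nat.le_of_mul_le_mul_left ?_ (by positivity : 0 < k ^ 2 * q ^ (k - 2) * Φ)
    calc k ^ 2 * q ^ (k - 2) * Φ * (2 ^ m * (2 * Ψ)) = B * Φ * (2 * Ψ) := by ring
      _ ≤ t ^ m * (2 * Ψ) :=
          Nat.mul_le_mul_right _ (Real.natCast_le_natCeil_rpow_inv_pow _ hm)
      _ ≤ k ^ 2 * q ^ (k - 2) * Φ ^ 2 := hΦ ▸ hW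
      _ = k ^ 2 * q ^ (k - 2) * Φ * Φ := by ring
  obtain ⟨N, c, hc, hN⟩ := ih Ψ (by nlinarith [Nat.one_le_two_pow (n := m)]) W rfl
  refine ⟨t + N, _, hc.of_recoloring hc₀, ?_⟩
  have hhalf : ((B * Ψ : ℕ) : ℝ) ^ (m⁻¹ : ℝ) ≤ r / 2 := by
    refine Real.rpow_inv_natCast_le_half hm (Nat.cast_nonneg _) ?_
    exact_mod_cast (by nlinarith : 2 ^ m * (B * Ψ) ≤ B * Φ)
  have ht : (t : ℝ) ≤ r + 1 := (Nat.ceil_lt_add_one (by positivity)).le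
  rw [Nat.cast_add]
  linarith

end Recursion

theorem sysColorable_of_isProperOn {k N : ℕ} {𝒜 : Finset (Finset V)} {U : Finset V}
    {c : V → Fin N} (hU : ∀ A ∈ 𝒜, A ⊆ U) (hc : IsProperOn k 𝒜 U c) : SysColorable k N 𝒜 := by
  refine ⟨c, fun A hA S hSA hS => ?_⟩
  by_contra! hmono
  exact hc ⟨A, S⟩ (mem_edgesWithin.2 ⟨hA, subset_inter hSA (hSA.trans (hU A hA)), hS⟩) hmono

theorem exists_sysColorable_le {k q : ℕ} {𝒜 : Finset (Finset V)} (h𝒜 : IsSystem 1 q 𝒜)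
    (hk : 2 ≤ k) (hq : 0 < q) :
    ∃ N, SysColorable k N 𝒜 ∧ (N : ℝ) ≤
      4 * ((2 ^ (2 * k - 2) * k ^ 2 : ℕ) * (#𝒜 : ℝ) ^ ((2 * k - 2 : ℕ) : ℝ)⁻¹ * q) + 1 := by
  obtain ⟨N, c, hc, hN⟩ := exists_isProperOn h𝒜 hk hq (𝒜.sup id)
  refine ⟨N, sysColorable_of_isProperOn (fun A hA => le_sup (f := id) hA) hc, hN.trans ?_⟩
  have hΦ : 2 ^ (2 * k - 2) * k ^ 2 * q ^ (k - 2) * #(edgesWithin k 𝒜 (𝒜.sup id)) ≤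
      2 ^ (2 * k - 2) * k ^ 2 * #𝒜 * q ^ (2 * k - 2) :=
    calc _ ≤ 2 ^ (2 * k - 2) * k ^ 2 * q ^ (k - 2) * (#𝒜 * q ^ k) := by
          gcongr; exact card_edgesWithin_le h𝒜.1
      _ = _ := by rw [show 2 * k - 2 = k - 2 + k by omega, pow_add]; ring
  gcongr
  exact Real.rpow_inv_natCast_le_mul (by omega) (Nat.cast_nonneg _)
    (by exact_mod_cast Nat.one_le_iff_ne_zero.2 (by positivity)) (Nat.cast_nonneg _)
    (Nat.cast_nonneg _) (by exact_mod_cast hΦ)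

/-- For every `k ≥ 3` there is `C > 0` such that every `1`-`(q,k)`-system (with `q ≥ k`)
consisting of `e ≥ 1` `q`-cliques has chromatic number at most `C · e^(1/(2k-2)) · q`. -/
theorem stmt6 (k : ℕ) (hk : 3 ≤ k) :
    ∃ C : ℝ, 0 < C ∧
      ∀ (q e : ℕ), k ≤ q → 1 ≤ e →
      ∀ (V : Type) [DecidableEq V] (𝒜 : Finset (Finset V)),
        IsSystem 1 q 𝒜 → 𝒜.card = e →
        ∃ n : ℕ, (n : ℝ) ≤ C * (e : ℝ) ^ ((1 : ℝ) / (2 * k - 2)) * q ∧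
          SysColorable k n 𝒜 := by
  refine ⟨4 * (2 ^ (2 * k - 2) * k ^ 2) + 1, by positivity, ?_⟩
  intro q e hkq he V _ 𝒜 h𝒜 rfl
  obtain ⟨N, hN, hNle⟩ := exists_sysColorable_le h𝒜 (by omega : 2 ≤ k) (by omega)
  refine ⟨N, ?_, hN⟩
  have hexp : (1 : ℝ) / (2 * k - 2) = ((2 * k - 2 : ℕ) : ℝ)⁻¹ := by
    rw [one_div, Nat.cast_sub (by omega)]; push_cast; ring
  rw [hexp]
  set E := (#𝒜 : ℝ) ^ ((2 * k - 2 : ℕ) : ℝ)⁻¹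
  have hone : 1 ≤ E * q := one_le_mul_of_one_le_of_one_le
    (Real.one_le_rpow (by exact_mod_cast he) (by positivity)) (by exact_mod_cast (by omega : 1 ≤ q))
  calc (N : ℝ) ≤ 4 * ((2 ^ (2 * k - 2) * k ^ 2 : ℕ) * E * q) + E * q := by linarith
    _ = _ := by push_cast; ring
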